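/- Let (H, B, φ) be a Hopf bracoid over a field K such that φ is a coalgebra morphism, and suppose that Σ Φ(h₍₂₎ ⊗ b) ⊗ h₍₁₎ = Σ Φ(h₍₁₎ ⊗ b) ⊗ h₍₂₎ holds in B ⊗ H for all h ∈ H and b ∈ B (this holds in particular whenever H is cocommutative). Then Φ : H ⊗ B → B is a coalgebra morphism: ε_B(Φ(h ⊗ b)) = ε_H(h) ε_B(b) and δ_B(Φ(h ⊗ b)) = Σ Φ(h₍₁₎ ⊗ b₍₁₎) ⊗ Φ(h₍₂₎ ⊗ b₍₂₎). -/

import Mathlib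

set_option maxHeartbeats 1600000
set_option synthInstance.maxHeartbeats 400000


open TensorProduct LinearMap

noncomputable section

namespace HopfBracoidPaper

variable (K : Type*) [Field K]
variable (H B : Type*) [Ring H] [Ring B] [HopfAlgebra K H] [HopfAlgebra K B]

/-- `u(h) = φ(h ⊗ 1_B)`. -/
def uMap (φ : H ⊗[K] B →ₗ[K] B) : H →ₗ[K] B :=
  φ ∘ₗ (TensorProduct.mk K H B).flip 1

/-- `Φ(h ⊗ b) = Σ S_B(u(h₍₁₎)) · φ(h₍₂₎ ⊗ b)`. -/
def PhiMap (φ : H ⊗[K] B →ₗ[K] B) : H ⊗[K] B →ₗ[K] B :=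
  LinearMap.mul' K B
    ∘ₗ TensorProduct.map (HopfAlgebra.antipode (R := K) ∘ₗ uMap K H B φ) φ
    ∘ₗ (TensorProduct.assoc K H H B).toLinearMap
    ∘ₗ LinearMap.rTensor B (Coalgebra.comul (R := K))

/-- `(B, φ)` is a left `H`-module. -/
structure IsModuleAction (φ : H ⊗[K] B →ₗ[K] B) : Prop where
  one_act : ∀ b : B, φ ((1 : H) ⊗ₜ[K] b) = b
  mul_act : ∀ (h h' : H) (b : B), φ ((h * h') ⊗ₜ[K] b) = φ (h ⊗ₜ[K] φ (h' ⊗ₜ[K] b))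

/-- `(H, B, φ)` is a Hopf bracoid: `(B, φ)` is a left `H`-module and
`φ(h ⊗ b·b') = Σ φ(h₍₁₎ ⊗ b) · Φ(h₍₂₎ ⊗ b')`. -/
structure IsHopfBracoid (φ : H ⊗[K] B →ₗ[K] B) : Prop where
  one_act : ∀ b : B, φ ((1 : H) ⊗ₜ[K] b) = b
  mul_act : ∀ (h h' : H) (b : B), φ ((h * h') ⊗ₜ[K] b) = φ (h ⊗ₜ[K] φ (h' ⊗ₜ[K] b))
  compat : ∀ (h : H) (b b' : B),
    φ (h ⊗ₜ[K] (b * b')) =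
      (LinearMap.mul' K B
        ∘ₗ TensorProduct.map φ (PhiMap K H B φ)
        ∘ₗ (TensorProduct.tensorTensorTensorComm K H H B B).toLinearMap)
        ((Coalgebra.comul (R := K) h) ⊗ₜ[K] (b ⊗ₜ[K] b'))

/-- `φ : H ⊗ B → B` is a coalgebra morphism:
`ε_B(φ(h ⊗ b)) = ε_H(h) ε_B(b)` and
`δ_B(φ(h ⊗ b)) = Σ φ(h₍₁₎ ⊗ b₍₁₎) ⊗ φ(h₍₂₎ ⊗ b₍₂₎)`. -/
structure IsCoalgebraMorphism (φ : H ⊗[K] B →ₗ[K] B) : Prop where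
  counit_comp : ∀ (h : H) (b : B),
    Coalgebra.counit (R := K) (φ (h ⊗ₜ[K] b)) =
      Coalgebra.counit (R := K) h * Coalgebra.counit (R := K) b
  comul_comp : ∀ (h : H) (b : B),
    Coalgebra.comul (R := K) (φ (h ⊗ₜ[K] b)) =
      (TensorProduct.map φ φ)
        ((TensorProduct.tensorTensorTensorComm K H H B B)
          ((Coalgebra.comul (R := K) h) ⊗ₜ[K] (Coalgebra.comul (R := K) b)))

/-- `(B, ψ)` is a left `H`-module algebra. -/
structure IsModuleAlgebra (ψ : H ⊗[K] B →ₗ[K] B) : Prop where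
  one_act : ∀ b : B, ψ ((1 : H) ⊗ₜ[K] b) = b
  mul_act : ∀ (h h' : H) (b : B), ψ ((h * h') ⊗ₜ[K] b) = ψ (h ⊗ₜ[K] ψ (h' ⊗ₜ[K] b))
  act_one : ∀ h : H, ψ (h ⊗ₜ[K] (1 : B)) = Coalgebra.counit (R := K) h • (1 : B)
  act_mul : ∀ (h : H) (b b' : B),
    ψ (h ⊗ₜ[K] (b * b')) =
      (LinearMap.mul' K B
        ∘ₗ TensorProduct.map ψ ψ
        ∘ₗ (TensorProduct.tensorTensorTensorComm K H H B B).toLinearMap)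
        ((Coalgebra.comul (R := K) h) ⊗ₜ[K] (b ⊗ₜ[K] b'))

/-- `π : H → B` is a 1-cocycle with action `γ`. -/
structure IsOneCocycle (π : H →ₗ[K] B) (γ : H ⊗[K] B →ₗ[K] B) : Prop where
  moduleAlgebra : IsModuleAlgebra K H B γ
  counit_comp : ∀ h : H, Coalgebra.counit (R := K) (π h) = Coalgebra.counit (R := K) h
  comul_comp : ∀ h : H,
    Coalgebra.comul (R := K) (π h) = (TensorProduct.map π π) (Coalgebra.comul (R := K) h)
  cocycle : ∀ h g : H,
    π (h * g) =
      (LinearMap.mul' K B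
        ∘ₗ TensorProduct.map π γ
        ∘ₗ (TensorProduct.assoc K H H B).toLinearMap)
        ((Coalgebra.comul (R := K) h) ⊗ₜ[K] π g)


/-- `Φ'(h ⊗ b) = Σ φ(h₍₁₎ ⊗ b) · S_B(u(h₍₂₎))`. -/
def PhiMap' (φ : H ⊗[K] B →ₗ[K] B) : H ⊗[K] B →ₗ[K] B :=
  LinearMap.mul' K B
    ∘ₗ TensorProduct.map φ (HopfAlgebra.antipode (R := K) ∘ₗ uMap K H B φ)
    ∘ₗ (TensorProduct.assoc K H B H).symm.toLinearMap
    ∘ₗ LinearMap.lTensor H (TensorProduct.comm K H B).toLinearMap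
    ∘ₗ (TensorProduct.assoc K H H B).toLinearMap
    ∘ₗ LinearMap.rTensor B (Coalgebra.comul (R := K))

/-- `ψ(h ⊗ b) = Σ π(h₍₁₎) · γ(h₍₂₎ ⊗ b)`. -/
def psiMap (π : H →ₗ[K] B) (γ : H ⊗[K] B →ₗ[K] B) : H ⊗[K] B →ₗ[K] B :=
  LinearMap.mul' K B
    ∘ₗ TensorProduct.map π γ
    ∘ₗ (TensorProduct.assoc K H H B).toLinearMap
    ∘ₗ LinearMap.rTensor B (Coalgebra.comul (R := K))

/-- `Σ ψ(h₍₂₎ ⊗ b) ⊗ h₍₁₎ = Σ ψ(h₍₁₎ ⊗ b) ⊗ h₍₂₎` in `B ⊗ H`. -/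
def SatisfiesStarCondition (ψ : H ⊗[K] B →ₗ[K] B) : Prop :=
  ∀ (h : H) (b : B),
    ((TensorProduct.comm K H B).toLinearMap ∘ₗ LinearMap.lTensor H ψ)
      ((TensorProduct.assoc K H H B) ((Coalgebra.comul (R := K) h) ⊗ₜ[K] b)) =
    ((TensorProduct.comm K H B).toLinearMap ∘ₗ LinearMap.lTensor H ψ)
      ((TensorProduct.assoc K H H B)
        (((TensorProduct.comm K H H) (Coalgebra.comul (R := K) h)) ⊗ₜ[K] b))

/-- A Hopf algebra is cocommutative if `c ∘ δ = δ`. -/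
def IsCocommutative : Prop :=
  ∀ h : H, (TensorProduct.comm K H H) (Coalgebra.comul (R := K) h) = Coalgebra.comul (R := K) h

/-- `x` is a group-like element: `δ(x) = x ⊗ x` and `ε(x) = 1`. -/
def IsGroupLike (x : B) : Prop :=
  Coalgebra.counit (R := K) x = 1 ∧ Coalgebra.comul (R := K) x = x ⊗ₜ[K] x

/-- `Φᵒᵖ(h ⊗ b) = Σ φ(h₍₂₎ ⊗ b) · S_B(u(h₍₁₎))`: the `Φ`-map of `φ` with respect to the
opposite multiplication of `B`. -/
def PhiOpMap (φ : H ⊗[K] B →ₗ[K] B) : H ⊗[K] B →ₗ[K] B :=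
  LinearMap.mul' K B
    ∘ₗ (TensorProduct.comm K B B).toLinearMap
    ∘ₗ TensorProduct.map (HopfAlgebra.antipode (R := K) ∘ₗ uMap K H B φ) φ
    ∘ₗ (TensorProduct.assoc K H H B).toLinearMap
    ∘ₗ LinearMap.rTensor B (Coalgebra.comul (R := K))


/-! ### Auxiliary material: convolution algebra and the antipode anti-coalgebra property -/

open Coalgebra HopfAlgebra

section ConvGeneral

variable {R : Type*} [CommSemiring R]
variable {C : Type*} [AddCommMonoid C] [Module R C] [Coalgebra R C]
variable {A : Type*} [Semiring A] [Algebra R A]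
variable {ι κ : Type*}

/-- Convolution product of linear maps from a coalgebra to an algebra. -/
def conv (f g : C →ₗ[R] A) : C →ₗ[R] A :=
  LinearMap.mul' R A ∘ₗ TensorProduct.map f g ∘ₗ Coalgebra.comul

/-- The convolution unit. -/
def cunit : C →ₗ[R] A := Algebra.linearMap R A ∘ₗ Coalgebra.counit

lemma conv_apply (f g : C →ₗ[R] A) (x : C) (r : Coalgebra.Repr R x ι) :
    conv f g x = ∑ i ∈ r.index, f (r.left i) * g (r.right i) := by
  simp only [conv, LinearMap.comp_apply, ← r.eq, map_sum, TensorProduct.map_tmul,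
    LinearMap.mul'_apply]

lemma cunit_apply (x : C) : (cunit (R := R) (C := C) (A := A)) x = algebraMap R A (counit x) :=
  rfl

lemma sum_counit_smul (x : C) (r : Coalgebra.Repr R x ι) :
    ∑ i ∈ r.index, counit (R := R) (r.left i) • r.right i = x := by
  have h := congrArg (TensorProduct.lid R C) (Coalgebra.sum_counit_tmul_eq r)
  rw [map_sum] at h
  simp only [TensorProduct.lid_tmul] at h
  simpa using h

lemma sum_smul_counit (x : C) (r : Coalgebra.Repr R x ι) :
    ∑ i ∈ r.index, counit (R := R) (r.right i) • r.left i = x := by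
  have h := congrArg (TensorProduct.rid R C) (Coalgebra.sum_tmul_counit_eq r)
  rw [map_sum] at h
  simp only [TensorProduct.rid_tmul] at h
  simpa using h

lemma conv_cunit_left (f : C →ₗ[R] A) : conv cunit f = f := by
  ext x
  rw [conv_apply _ _ x (ℛ R x)]
  have : ∑ i ∈ (ℛ R x).index, (cunit : C →ₗ[R] A) ((ℛ R x).left i) * f ((ℛ R x).right i)
      = ∑ i ∈ (ℛ R x).index, f (counit (R := R) ((ℛ R x).left i) • (ℛ R x).right i) := by
    refine Finset.sum_congr rfl fun i _ => ?_
    rw [cunit_apply, map_smul, Algebra.smul_def]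
  rw [this, ← map_sum, sum_counit_smul x (ℛ R x)]

lemma conv_cunit_right (f : C →ₗ[R] A) : conv f cunit = f := by
  ext x
  rw [conv_apply _ _ x (ℛ R x)]
  have : ∑ i ∈ (ℛ R x).index, f ((ℛ R x).left i) * (cunit : C →ₗ[R] A) ((ℛ R x).right i)
      = ∑ i ∈ (ℛ R x).index, f (counit (R := R) ((ℛ R x).right i) • (ℛ R x).left i) := by
    refine Finset.sum_congr rfl fun i _ => ?_
    rw [cunit_apply, map_smul, Algebra.smul_def, Algebra.commutes]
  rw [this, ← map_sum, sum_smul_counit x (ℛ R x)]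

lemma conv_assoc (f g h : C →ₗ[R] A) : conv (conv f g) h = conv f (conv g h) := by
  ext x
  set r := ℛ R x
  have key := Coalgebra.sum_map_tmul_tmul_eq f g h x (repr := r)
    (a₁ := fun i => ℛ R (r.left i)) (a₂ := fun i => ℛ R (r.right i))
  have key2 := congrArg (LinearMap.mul' R A ∘ₗ LinearMap.lTensor A (LinearMap.mul' R A)) key
  rw [map_sum, map_sum] at key2
  simp only [map_sum, LinearMap.comp_apply, LinearMap.lTensor_tmul, LinearMap.mul'_apply] at key2
  rw [conv_apply _ _ x r, conv_apply _ _ x r]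
  have l1 : ∑ i ∈ r.index, conv f g (r.left i) * h (r.right i)
      = ∑ i ∈ r.index, ∑ j ∈ (ℛ R (r.left i)).index,
          f ((ℛ R (r.left i)).left j) * (g ((ℛ R (r.left i)).right j) * h (r.right i)) := by
    refine Finset.sum_congr rfl fun i _ => ?_
    rw [conv_apply _ _ _ (ℛ R (r.left i)), Finset.sum_mul]
    exact Finset.sum_congr rfl fun j _ => (mul_assoc _ _ _)
  have l2 : ∑ i ∈ r.index, f (r.left i) * conv g h (r.right i)
      = ∑ i ∈ r.index, ∑ j ∈ (ℛ R (r.right i)).index,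
          f (r.left i) * (g ((ℛ R (r.right i)).left j) * h ((ℛ R (r.right i)).right j)) := by
    refine Finset.sum_congr rfl fun i _ => ?_
    rw [conv_apply _ _ _ (ℛ R (r.right i)), Finset.mul_sum]
  rw [l1, l2, ← key2]

lemma conv_inv_unique {f g g' : C →ₗ[R] A} (h1 : conv f g = cunit) (h2 : conv g' f = cunit) :
    g = g' := by
  calc g = conv cunit g := (conv_cunit_left g).symm
    _ = conv (conv g' f) g := by rw [h2]
    _ = conv g' (conv f g) := conv_assoc _ _ _
    _ = conv g' cunit := by rw [h1]
    _ = g' := conv_cunit_right g'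

end ConvGeneral

section HopfGeneral

variable {R : Type*} [CommSemiring R]
variable {A : Type*} [Semiring A] [HopfAlgebra R A]
variable {ι κ : Type*}

lemma counit_antipode (x : A) :
    counit (R := R) (antipode (R := R) x) = counit (R := R) x := by
  set r := ℛ R x
  have h := congrArg (counit (R := R)) (sum_antipode_mul_eq_algebraMap_counit (R := R) r)
  rw [map_sum, Bialgebra.counit_algebraMap] at h
  simp only [Bialgebra.counit_mul] at h
  calc counit (R := R) (antipode (R := R) x)
      = counit (R := R) (antipode (R := R) (∑ i ∈ r.index,
          counit (R := R) (r.right i) • r.left i)) := by rw [sum_smul_counit x r]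
    _ = ∑ i ∈ r.index, counit (R := R) (antipode (R := R) (r.left i)) *
          counit (R := R) (r.right i) := by
        rw [map_sum, map_sum]
        exact Finset.sum_congr rfl fun i _ => by
          rw [map_smul, map_smul, smul_eq_mul, mul_comm]
    _ = counit (R := R) x := h

/-- The antipode is an anti-coalgebra morphism: `δ ∘ S = τ ∘ (S ⊗ S) ∘ δ`. -/
lemma comul_comp_antipode :
    (Coalgebra.comul (R := R) (A := A)) ∘ₗ antipode (R := R) =
      (TensorProduct.comm R A A).toLinearMap ∘ₗ
        TensorProduct.map (antipode (R := R)) (antipode (R := R)) ∘ₗ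
        Coalgebra.comul (R := R) := by
  set g' : A →ₗ[R] A ⊗[R] A := (TensorProduct.comm R A A).toLinearMap ∘ₗ
        TensorProduct.map (antipode (R := R)) (antipode (R := R)) ∘ₗ
        Coalgebra.comul (R := R) with hg'
  have h1 : conv (Coalgebra.comul (R := R) (A := A))
      ((Coalgebra.comul (R := R) (A := A)) ∘ₗ antipode (R := R)) = cunit := by
    ext x
    rw [conv_apply _ _ x (ℛ R x)]
    calc ∑ i ∈ (ℛ R x).index, Coalgebra.comul (R := R) ((ℛ R x).left i) *
          ((Coalgebra.comul (R := R) ∘ₗ antipode (R := R)) ((ℛ R x).right i))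
        = Coalgebra.comul (R := R) (∑ i ∈ (ℛ R x).index,
            (ℛ R x).left i * antipode (R := R) ((ℛ R x).right i)) := by
          rw [map_sum]
          exact Finset.sum_congr rfl fun i _ => by
            rw [LinearMap.comp_apply, ← Bialgebra.comul_mul]
      _ = cunit x := by
          rw [sum_mul_antipode_eq_algebraMap_counit (R := R) (ℛ R x), Bialgebra.comul_algebraMap, cunit_apply]
  have h2 : conv g' (Coalgebra.comul (R := R) (A := A)) = cunit := by
    ext x
    set r := ℛ R x with hr
    set r1 : ∀ i, Coalgebra.Repr R (r.left i) (A × A) := fun i => ℛ R (r.left i) with hr1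
    set r2 : ∀ i, Coalgebra.Repr R (r.right i) (A × A) := fun i => ℛ R (r.right i) with hr2
    set r11 : ∀ i k, Coalgebra.Repr R ((r1 i).left k) (A × A) := fun i k => ℛ R ((r1 i).left k) with hr11
    set r12 : ∀ i k, Coalgebra.Repr R ((r1 i).right k) (A × A) := fun i k => ℛ R ((r1 i).right k)
      with hr12
    set V3 : A ⊗[R] (A ⊗[R] A) →ₗ[R] A ⊗[R] A :=
      LinearMap.mul' R (A ⊗[R] A) ∘ₗ LinearMap.rTensor (A ⊗[R] A) g' with hV3
    have V3val : ∀ (a y z : A) (ra : Coalgebra.Repr R a (A × A)),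
        V3 (a ⊗ₜ[R] (y ⊗ₜ[R] z)) = ∑ k ∈ ra.index,
          (antipode (R := R) (ra.right k) * y) ⊗ₜ[R] (antipode (R := R) (ra.left k) * z) := by
      intro a y z ra
      rw [hV3, hg']
      simp only [LinearMap.comp_apply, LinearMap.rTensor_tmul, LinearMap.coe_comp,
        LinearEquiv.coe_coe, Function.comp_apply]
      rw [← ra.eq, map_sum, map_sum]
      simp only [TensorProduct.map_tmul, TensorProduct.comm_tmul]
      rw [TensorProduct.sum_tmul, map_sum]
      simp only [LinearMap.mul'_apply, Algebra.TensorProduct.tmul_mul_tmul]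
    have step1 := congrArg V3 (Coalgebra.sum_tmul_tmul_eq r r1 r2)
    rw [map_sum, map_sum] at step1
    simp only [map_sum] at step1
    have step1L : ∑ i ∈ r.index, ∑ k ∈ (r1 i).index,
          V3 ((r1 i).left k ⊗ₜ[R] ((r1 i).right k ⊗ₜ[R] r.right i))
        = ∑ i ∈ r.index, ∑ k ∈ (r1 i).index, ∑ n ∈ (r11 i k).index,
          (antipode (R := R) ((r11 i k).right n) * (r1 i).right k) ⊗ₜ[R]
            (antipode (R := R) ((r11 i k).left n) * r.right i) := by
      exact Finset.sum_congr rfl fun i _ => Finset.sum_congr rfl fun k _ =>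
        V3val _ _ _ (r11 i k)
    have step1R : ∑ i ∈ r.index, ∑ m ∈ (r2 i).index,
          V3 (r.left i ⊗ₜ[R] ((r2 i).left m ⊗ₜ[R] (r2 i).right m))
        = ∑ i ∈ r.index, ∑ m ∈ (r2 i).index, ∑ k ∈ (r1 i).index,
          (antipode (R := R) ((r1 i).right k) * (r2 i).left m) ⊗ₜ[R]
            (antipode (R := R) ((r1 i).left k) * (r2 i).right m) := by
      exact Finset.sum_congr rfl fun i _ => Finset.sum_congr rfl fun m _ =>
        V3val _ _ _ (r1 i)
    rw [step1L, step1R] at step1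
    have lhs_eq : conv g' (Coalgebra.comul (R := R) (A := A)) x
        = ∑ i ∈ r.index, ∑ m ∈ (r2 i).index, ∑ k ∈ (r1 i).index,
          (antipode (R := R) ((r1 i).right k) * (r2 i).left m) ⊗ₜ[R]
            (antipode (R := R) ((r1 i).left k) * (r2 i).right m) := by
      rw [conv_apply _ _ x r]
      refine Finset.sum_congr rfl fun i _ => ?_
      rw [hg']
      simp only [LinearMap.comp_apply, LinearEquiv.coe_coe]
      rw [← (r1 i).eq, ← (r2 i).eq, map_sum, map_sum]
      simp only [TensorProduct.map_tmul, TensorProduct.comm_tmul]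
      rw [Finset.sum_mul_sum]
      rw [Finset.sum_comm]
      simp only [Algebra.TensorProduct.tmul_mul_tmul]
    rw [lhs_eq, ← step1]
    set U3 : A → (A ⊗[R] (A ⊗[R] A) →ₗ[R] A ⊗[R] A) := fun q =>
      (TensorProduct.comm R A A).toLinearMap ∘ₗ
        TensorProduct.map ((LinearMap.mulRight R q) ∘ₗ antipode (R := R))
          (LinearMap.mul' R A ∘ₗ LinearMap.rTensor A (antipode (R := R))) with hU3
    have U3val : ∀ (q a y z : A), U3 q (a ⊗ₜ[R] (y ⊗ₜ[R] z))
        = (antipode (R := R) y * z) ⊗ₜ[R] (antipode (R := R) a * q) := by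
      intro q a y z
      simp [hU3, TensorProduct.comm_tmul]
    have step2 : ∀ i ∈ r.index, ∑ k ∈ (r1 i).index, ∑ n ∈ (r11 i k).index,
          (antipode (R := R) ((r11 i k).right n) * (r1 i).right k) ⊗ₜ[R]
            (antipode (R := R) ((r11 i k).left n) * r.right i)
        = (1 : A) ⊗ₜ[R] (antipode (R := R) (r.left i) * r.right i) := by
      intro i _
      have c2 := congrArg (U3 (r.right i))
        (Coalgebra.sum_tmul_tmul_eq (r1 i) (r11 i) (r12 i))
      rw [map_sum, map_sum] at c2
      simp only [map_sum, U3val] at c2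
      rw [c2]
      have : ∀ k ∈ (r1 i).index, ∑ n ∈ (r12 i k).index,
            (antipode (R := R) ((r12 i k).left n) * (r12 i k).right n) ⊗ₜ[R]
              (antipode (R := R) ((r1 i).left k) * r.right i)
          = (1 : A) ⊗ₜ[R] (antipode (R := R)
              (counit (R := R) ((r1 i).right k) • (r1 i).left k) * r.right i) := by
        intro k _
        rw [← TensorProduct.sum_tmul, sum_antipode_mul_eq_smul (R := R) (r12 i k),
          TensorProduct.smul_tmul, map_smul, smul_mul_assoc]
      rw [Finset.sum_congr rfl this, ← TensorProduct.tmul_sum]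
      congr 1
      rw [← Finset.sum_mul, ← map_sum, sum_smul_counit _ (r1 i)]
    rw [Finset.sum_congr rfl step2, ← TensorProduct.tmul_sum,
      sum_antipode_mul_eq_smul (R := R) r, cunit_apply]
    rw [tmul_smul, ← Algebra.TensorProduct.one_def, Algebra.algebraMap_eq_smul_one]
  exact conv_inv_unique h1 h2

lemma comul_antipode_repr (x : A) (r : Coalgebra.Repr R x ι) :
    Coalgebra.comul (R := R) (antipode (R := R) x) =
      ∑ i ∈ r.index, antipode (R := R) (r.right i) ⊗ₜ[R] antipode (R := R) (r.left i) := by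
  have h := LinearMap.congr_fun (comul_comp_antipode (R := R) (A := A)) x
  simp only [LinearMap.comp_apply, LinearEquiv.coe_coe] at h
  rw [h, ← r.eq, map_sum, map_sum]
  simp only [TensorProduct.map_tmul, TensorProduct.comm_tmul]

end HopfGeneral

section BracoidAux

variable {K H B}
variable {ι κ : Type*}

lemma uMap_apply (φ : H ⊗[K] B →ₗ[K] B) (x : H) : uMap K H B φ x = φ (x ⊗ₜ[K] 1) := rfl

lemma PhiMap_apply_repr (φ : H ⊗[K] B →ₗ[K] B) (x : H) (y : B) (r : Coalgebra.Repr K x ι) :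
    PhiMap K H B φ (x ⊗ₜ[K] y) = ∑ i ∈ r.index,
      HopfAlgebra.antipode (R := K) (uMap K H B φ (r.left i)) * φ (r.right i ⊗ₜ[K] y) := by
  simp only [PhiMap, LinearMap.comp_apply, LinearMap.rTensor_tmul]
  rw [← r.eq, TensorProduct.sum_tmul, map_sum, map_sum, map_sum]
  simp only [LinearEquiv.coe_coe, TensorProduct.assoc_tmul, TensorProduct.map_tmul,
    LinearMap.mul'_apply, LinearMap.comp_apply]

lemma counit_uMap {φ : H ⊗[K] B →ₗ[K] B} (hco : IsCoalgebraMorphism K H B φ) (x : H) :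
    Coalgebra.counit (R := K) (uMap K H B φ x) = Coalgebra.counit (R := K) x := by
  rw [uMap_apply, hco.counit_comp, Bialgebra.counit_one, mul_one]

lemma comul_uMap {φ : H ⊗[K] B →ₗ[K] B} (hco : IsCoalgebraMorphism K H B φ) (x : H)
    (r : Coalgebra.Repr K x ι) :
    Coalgebra.comul (R := K) (uMap K H B φ x) =
      ∑ i ∈ r.index, uMap K H B φ (r.left i) ⊗ₜ[K] uMap K H B φ (r.right i) := by
  rw [uMap_apply, hco.comul_comp, Bialgebra.comul_one, Algebra.TensorProduct.one_def, ← r.eq,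
    TensorProduct.sum_tmul, map_sum, map_sum]
  simp only [TensorProduct.tensorTensorTensorComm_tmul, TensorProduct.map_tmul, uMap_apply]

/-- The canonical representation of `comul (u x)` coming from a representation of `comul x`. -/
def uMapRepr (φ : H ⊗[K] B →ₗ[K] B) (hco : IsCoalgebraMorphism K H B φ) (x : H)
    (r : Coalgebra.Repr K x ι) : Coalgebra.Repr K (uMap K H B φ x) ι where
  index := r.index
  left := fun i => uMap K H B φ (r.left i)
  right := fun i => uMap K H B φ (r.right i)
  eq := (comul_uMap hco x r).symm

lemma comul_antipode_uMap {φ : H ⊗[K] B →ₗ[K] B} (hco : IsCoalgebraMorphism K H B φ) (x : H)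
    (r : Coalgebra.Repr K x ι) :
    Coalgebra.comul (R := K) (HopfAlgebra.antipode (R := K) (uMap K H B φ x)) =
      ∑ i ∈ r.index,
        HopfAlgebra.antipode (R := K) (uMap K H B φ (r.right i)) ⊗ₜ[K]
          HopfAlgebra.antipode (R := K) (uMap K H B φ (r.left i)) :=
  comul_antipode_repr _ (uMapRepr φ hco x r)

lemma comul_phi_repr {φ : H ⊗[K] B →ₗ[K] B} (hco : IsCoalgebraMorphism K H B φ) (x : H) (y : B)
    (rx : Coalgebra.Repr K x ι) (ry : Coalgebra.Repr K y κ) :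
    Coalgebra.comul (R := K) (φ (x ⊗ₜ[K] y)) =
      ∑ i ∈ rx.index, ∑ j ∈ ry.index,
        φ (rx.left i ⊗ₜ[K] ry.left j) ⊗ₜ[K] φ (rx.right i ⊗ₜ[K] ry.right j) := by
  rw [hco.comul_comp, ← rx.eq, ← ry.eq, TensorProduct.sum_tmul]
  simp only [TensorProduct.tmul_sum, map_sum, TensorProduct.tensorTensorTensorComm_tmul,
    TensorProduct.map_tmul]

lemma star_sum {φ : H ⊗[K] B →ₗ[K] B} (hstar : SatisfiesStarCondition K H B (PhiMap K H B φ))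
    (x : H) (c : B) (r : Coalgebra.Repr K x ι) :
    ∑ i ∈ r.index, PhiMap K H B φ (r.right i ⊗ₜ[K] c) ⊗ₜ[K] r.left i =
      ∑ i ∈ r.index, PhiMap K H B φ (r.left i ⊗ₜ[K] c) ⊗ₜ[K] r.right i := by
  have h := hstar x c
  rw [← r.eq] at h
  simp only [map_sum, TensorProduct.comm_tmul, TensorProduct.sum_tmul,
    TensorProduct.assoc_tmul, LinearMap.lTensor_tmul, LinearMap.comp_apply,
    LinearEquiv.coe_coe] at h
  exact h

end BracoidAux

/-- If `(H, B, φ)` is a Hopf bracoid such that `φ` is a coalgebra morphism and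
`Σ Φ(h₍₂₎ ⊗ b) ⊗ h₍₁₎ = Σ Φ(h₍₁₎ ⊗ b) ⊗ h₍₂₎`, then `Φ` is a coalgebra morphism. -/
theorem statement4 (φ : H ⊗[K] B →ₗ[K] B)
    (hbr : IsHopfBracoid K H B φ) (hco : IsCoalgebraMorphism K H B φ)
    (hstar : SatisfiesStarCondition K H B (PhiMap K H B φ)) :
    IsCoalgebraMorphism K H B (PhiMap K H B φ) := by
  constructor
  · -- counit part
    intro h b
    set r := ℛ K h with hrdef
    rw [PhiMap_apply_repr φ h b r, map_sum]
    have e1 : ∀ i ∈ r.index,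
        Coalgebra.counit (R := K) (HopfAlgebra.antipode (R := K) (uMap K H B φ (r.left i)) *
          φ (r.right i ⊗ₜ[K] b))
        = (Coalgebra.counit (R := K) (r.left i) * Coalgebra.counit (R := K) (r.right i)) *
            Coalgebra.counit (R := K) b := by
      intro i _
      rw [Bialgebra.counit_mul, counit_antipode, counit_uMap hco, hco.counit_comp, mul_assoc]
    rw [Finset.sum_congr rfl e1, ← Finset.sum_mul]
    congr 1
    have e2 := congrArg (Coalgebra.counit (R := K)) (sum_smul_counit h r)
    rw [map_sum] at e2
    simp only [map_smul, smul_eq_mul] at e2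
    rw [← e2]
    exact Finset.sum_congr rfl fun i _ => mul_comm _ _
  · -- comul part
    intro h b
    set r := ℛ K h with hr
    set r1 : ∀ i, Coalgebra.Repr K (r.left i) (H × H) := fun i => ℛ K (r.left i) with hr1
    set r2 : ∀ i, Coalgebra.Repr K (r.right i) (H × H) := fun i => ℛ K (r.right i) with hr2
    set r11 : ∀ i k, Coalgebra.Repr K ((r1 i).left k) (H × H) := fun i k => ℛ K ((r1 i).left k) with hr11
    set r12 : ∀ i k, Coalgebra.Repr K ((r1 i).right k) (H × H) := fun i k => ℛ K ((r1 i).right k)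
      with hr12
    set rb := ℛ K b with hrb
    set su : H → B := fun x => HopfAlgebra.antipode (R := K) (uMap K H B φ x) with hsu
    -- right-hand side
    have rhs_eq : (TensorProduct.map (PhiMap K H B φ) (PhiMap K H B φ))
          ((TensorProduct.tensorTensorTensorComm K H H B B)
            ((Coalgebra.comul (R := K) h) ⊗ₜ[K] (Coalgebra.comul (R := K) b)))
        = ∑ i ∈ r.index, ∑ j ∈ rb.index,
            PhiMap K H B φ (r.left i ⊗ₜ[K] rb.left j) ⊗ₜ[K]
              PhiMap K H B φ (r.right i ⊗ₜ[K] rb.right j) := by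
      rw [← r.eq, ← rb.eq, TensorProduct.sum_tmul]
      simp only [TensorProduct.tmul_sum, map_sum, TensorProduct.tensorTensorTensorComm_tmul,
        TensorProduct.map_tmul]
    -- left-hand side
    have lhs_eq : Coalgebra.comul (R := K) (PhiMap K H B φ (h ⊗ₜ[K] b))
        = ∑ i ∈ r.index, ∑ k ∈ (r1 i).index, ∑ m ∈ (r2 i).index, ∑ j ∈ rb.index,
            (su ((r1 i).right k) * φ ((r2 i).left m ⊗ₜ[K] rb.left j)) ⊗ₜ[K]
              (su ((r1 i).left k) * φ ((r2 i).right m ⊗ₜ[K] rb.right j)) := by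
      rw [PhiMap_apply_repr φ h b r, map_sum]
      refine Finset.sum_congr rfl fun i _ => ?_
      rw [Bialgebra.comul_mul, comul_antipode_uMap hco _ (r1 i),
        comul_phi_repr hco _ _ (r2 i) rb, Finset.sum_mul_sum]
      simp only [Finset.mul_sum, Algebra.TensorProduct.tmul_mul_tmul, hsu]
    rw [lhs_eq, rhs_eq]
    -- the key rearrangement, for fixed c and d
    have key : ∀ c d : B,
        (∑ i ∈ r.index, ∑ k ∈ (r1 i).index, ∑ m ∈ (r2 i).index,
            (su ((r1 i).right k) * φ ((r2 i).left m ⊗ₜ[K] c)) ⊗ₜ[K]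
              (su ((r1 i).left k) * φ ((r2 i).right m ⊗ₜ[K] d)))
        = ∑ i ∈ r.index,
            PhiMap K H B φ (r.left i ⊗ₜ[K] c) ⊗ₜ[K] PhiMap K H B φ (r.right i ⊗ₜ[K] d) := by
      intro c d
      set suL : H →ₗ[K] B := HopfAlgebra.antipode (R := K) ∘ₗ uMap K H B φ with hsuL
      set phiAt : B → (H →ₗ[K] B) := fun e => φ ∘ₗ (TensorProduct.mk K H B).flip e with hphiAt
      set pr : B → (H ⊗[K] H →ₗ[K] B) := fun e =>
        LinearMap.mul' K B ∘ₗ TensorProduct.map suL (phiAt e) with hpr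
      have prval : ∀ (e : B) (x y : H), pr e (x ⊗ₜ[K] y) = su x * φ (y ⊗ₜ[K] e) := by
        intro e x y
        simp [hpr, hphiAt, hsuL, hsu]
      -- step A1 : regrouping via coassociativity
      set V : H ⊗[K] (H ⊗[K] H) →ₗ[K] B ⊗[K] B :=
        TensorProduct.map (pr c) (pr d) ∘ₗ
          (TensorProduct.tensorTensorTensorComm K H H H H).toLinearMap ∘ₗ
          LinearMap.rTensor (H ⊗[K] H) (TensorProduct.comm K H H).toLinearMap ∘ₗ
          LinearMap.rTensor (H ⊗[K] H) (Coalgebra.comul (R := K)) with hV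
      have Vval : ∀ (x y z : H) (rx : Coalgebra.Repr K x (H × H)),
          V (x ⊗ₜ[K] (y ⊗ₜ[K] z)) = ∑ k ∈ rx.index,
            (su (rx.right k) * φ (y ⊗ₜ[K] c)) ⊗ₜ[K] (su (rx.left k) * φ (z ⊗ₜ[K] d)) := by
        intro x y z rx
        rw [hV]
        simp only [LinearMap.comp_apply, LinearMap.rTensor_tmul, LinearEquiv.coe_coe]
        rw [← rx.eq, map_sum, TensorProduct.sum_tmul, map_sum, map_sum]
        simp only [LinearMap.rTensor_tmul, LinearEquiv.coe_coe, TensorProduct.comm_tmul,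
          TensorProduct.tensorTensorTensorComm_tmul, TensorProduct.map_tmul, prval]
      have a1 := congrArg V (Coalgebra.sum_tmul_tmul_eq r r1 r2)
      rw [map_sum, map_sum] at a1
      simp only [map_sum] at a1
      have a1L : ∑ i ∈ r.index, ∑ k ∈ (r1 i).index,
            V ((r1 i).left k ⊗ₜ[K] ((r1 i).right k ⊗ₜ[K] r.right i))
          = ∑ i ∈ r.index, ∑ k ∈ (r1 i).index, ∑ n ∈ (r11 i k).index,
              (su ((r11 i k).right n) * φ ((r1 i).right k ⊗ₜ[K] c)) ⊗ₜ[K]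
                (su ((r11 i k).left n) * φ (r.right i ⊗ₜ[K] d)) :=
        Finset.sum_congr rfl fun i _ => Finset.sum_congr rfl fun k _ => Vval _ _ _ (r11 i k)
      have a1R : ∑ i ∈ r.index, ∑ m ∈ (r2 i).index,
            V (r.left i ⊗ₜ[K] ((r2 i).left m ⊗ₜ[K] (r2 i).right m))
          = ∑ i ∈ r.index, ∑ k ∈ (r1 i).index, ∑ m ∈ (r2 i).index,
              (su ((r1 i).right k) * φ ((r2 i).left m ⊗ₜ[K] c)) ⊗ₜ[K]
                (su ((r1 i).left k) * φ ((r2 i).right m ⊗ₜ[K] d)) := by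
        refine Finset.sum_congr rfl fun i _ => ?_
        rw [Finset.sum_congr rfl fun m _ => Vval _ _ _ (r1 i), Finset.sum_comm]
      rw [a1L, a1R] at a1
      rw [← a1]
      -- steps A2 and B (star condition), for each i
      have stepAB : ∀ i ∈ r.index,
          ∑ k ∈ (r1 i).index, ∑ n ∈ (r11 i k).index,
              (su ((r11 i k).right n) * φ ((r1 i).right k ⊗ₜ[K] c)) ⊗ₜ[K]
                (su ((r11 i k).left n) * φ (r.right i ⊗ₜ[K] d))
          = ∑ k ∈ (r1 i).index,
              PhiMap K H B φ ((r1 i).left k ⊗ₜ[K] c) ⊗ₜ[K]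
                (su ((r1 i).right k) * φ (r.right i ⊗ₜ[K] d)) := by
        intro i _
        set q : B := φ (r.right i ⊗ₜ[K] d) with hq
        set U : H ⊗[K] (H ⊗[K] H) →ₗ[K] B ⊗[K] B :=
          (TensorProduct.comm K B B).toLinearMap ∘ₗ
            TensorProduct.map (LinearMap.mulRight K q ∘ₗ suL) (pr c) with hU
        have Uval : ∀ x y z : H, U (x ⊗ₜ[K] (y ⊗ₜ[K] z))
            = (su y * φ (z ⊗ₜ[K] c)) ⊗ₜ[K] (su x * q) := by
          intro x y z
          simp [hU, hsuL, hsu, TensorProduct.comm_tmul, prval]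
        have ab := congrArg U (Coalgebra.sum_tmul_tmul_eq (r1 i) (r11 i) (r12 i))
        rw [map_sum, map_sum] at ab
        simp only [map_sum, Uval] at ab
        rw [ab]
        have abr : ∀ k ∈ (r1 i).index, ∑ n ∈ (r12 i k).index,
              (su ((r12 i k).left n) * φ ((r12 i k).right n ⊗ₜ[K] c)) ⊗ₜ[K]
                (su ((r1 i).left k) * q)
            = PhiMap K H B φ ((r1 i).right k ⊗ₜ[K] c) ⊗ₜ[K] (su ((r1 i).left k) * q) := by
          intro k _
          rw [← TensorProduct.sum_tmul, ← PhiMap_apply_repr φ _ _ (r12 i k)]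
        rw [Finset.sum_congr rfl abr]
        -- star condition
        set T : B ⊗[K] H →ₗ[K] B ⊗[K] B :=
          TensorProduct.map LinearMap.id (LinearMap.mulRight K q ∘ₗ suL) with hT
        have st := congrArg T (star_sum hstar (r.left i) c (r1 i))
        rw [map_sum, map_sum] at st
        simp only [TensorProduct.map_tmul, LinearMap.id_coe, id_eq, LinearMap.comp_apply,
          LinearMap.mulRight_apply, hsuL, hsu, hT] at st
        exact st
      rw [Finset.sum_congr rfl stepAB]
      -- step C : regrouping back via coassociativity
      set V2 : H ⊗[K] (H ⊗[K] H) →ₗ[K] B ⊗[K] B :=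
        TensorProduct.map (PhiMap K H B φ ∘ₗ (TensorProduct.mk K H B).flip c) (pr d) with hV2
      have cc := congrArg V2 (Coalgebra.sum_tmul_tmul_eq r r1 r2)
      rw [map_sum, map_sum] at cc
      simp only [map_sum, hV2, TensorProduct.map_tmul, LinearMap.comp_apply,
        LinearMap.flip_apply, TensorProduct.mk_apply, prval] at cc
      rw [cc]
      refine Finset.sum_congr rfl fun i _ => ?_
      rw [← TensorProduct.tmul_sum, ← PhiMap_apply_repr φ _ _ (r2 i)]
    -- reorder the sums and apply `key`
    have reorder : ∑ i ∈ r.index, ∑ k ∈ (r1 i).index, ∑ m ∈ (r2 i).index, ∑ j ∈ rb.index,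
            (su ((r1 i).right k) * φ ((r2 i).left m ⊗ₜ[K] rb.left j)) ⊗ₜ[K]
              (su ((r1 i).left k) * φ ((r2 i).right m ⊗ₜ[K] rb.right j))
        = ∑ j ∈ rb.index, ∑ i ∈ r.index, ∑ k ∈ (r1 i).index, ∑ m ∈ (r2 i).index,
            (su ((r1 i).right k) * φ ((r2 i).left m ⊗ₜ[K] rb.left j)) ⊗ₜ[K]
              (su ((r1 i).left k) * φ ((r2 i).right m ⊗ₜ[K] rb.right j)) := by
      rw [Finset.sum_congr rfl fun i _ => Finset.sum_congr rfl fun k _ =>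
        Finset.sum_comm]
      rw [Finset.sum_congr rfl fun i _ => Finset.sum_comm]
      exact Finset.sum_comm
    rw [reorder, Finset.sum_congr rfl fun j _ => key (rb.left j) (rb.right j)]
    exact Finset.sum_comm

end HopfBracoidPaper
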